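/- For 1 ≤ p < ∞, c > 0, ε > 0 and base metric d, the graph GOSPA distance d^{(c,ε)}, defined by minimizing over the binary assignment matrices 𝒲_{X,Y}, is a metric on the space of undirected unweighted graphs with node attributes: for all graphs X, Y, Z, (i) d^{(c,ε)}(X,Y) = 0 if and only if X = Y; (ii) d^{(c,ε)}(X,Y) = d^{(c,ε)}(Y,X); (iii) d^{(c,ε)}(X,Y) ≤ d^{(c,ε)}(X,Z) + d^{(c,ε)}(Z,Y). -/

import Mathlib

/-!
An assignment matrix in `𝒲_{X,Y}` is the same thing as a partial matching `f : Fin n_X ≃. Fin n_Y`,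
and its objective is `c^p/2` for every unmatched node, `d^p` for every matched pair, and
`ε^p/2 ‖A_X P_f − P_f A_Y‖`, where `P_f` is the partial permutation matrix of `f`. Symmetry is
`f ↦ f.symm`. The objective vanishes exactly when `f` is a bijection between equal attributes that
preserves adjacency, which is equality of the graphs. For the triangle inequality, compose optimal
matchings `h : X ⇀ Z` and `g : Z ⇀ Y`. The edge mismatch of `h.trans g` is `M_h P_g + P_h M_g`, so
the edge cost is subadditive; the node cost of `h.trans g` is charged to the nodes of `Z`, where the
triangle inequality of `d` applies (an absent partner counting as a point at distance
`(c^p/2)^{1/p}`). Minkowski's inequality for `(∑ₖ aₖ^p + V)^{1/p}` combines the two parts.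
-/

open scoped BigOperators Matrix

namespace GraphGOSPA

structure Graph (𝕏 : Type*) [MetricSpace 𝕏] where
  n : ℕ
  nodes : Fin n → 𝕏
  nodes_inj : Function.Injective nodes
  A : Matrix (Fin n) (Fin n) ℝ
  A_symm : A.IsSymm
  A_01 : ∀ i j, A i j = 0 ∨ A i j = 1
  A_diag : ∀ i, A i i = 0

variable {𝕏 : Type*} [MetricSpace 𝕏]

def onorm {m n : ℕ} (M : Matrix (Fin m) (Fin n) ℝ) : ℝ :=
  ∑ i, ∑ j, |M i j|

def topLeft {m n : ℕ} (W : Matrix (Fin (m+1)) (Fin (n+1)) ℝ) :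
    Matrix (Fin m) (Fin n) ℝ :=
  fun i j => W i.castSucc j.castSucc

/-- The set `𝒲_{X,Y}`. -/
def Wset (nX nY : ℕ) : Set (Matrix (Fin (nX+1)) (Fin (nY+1)) ℝ) :=
  {W | (∀ i j, W i j = 0 ∨ W i j = 1) ∧
    (∀ j : Fin nY, ∑ i, W i j.castSucc = 1) ∧
    (∀ i : Fin nX, ∑ j, W i.castSucc j = 1) ∧
    W (Fin.last nX) (Fin.last nY) = 0}

/-- The relaxed set `𝒲̄_{X,Y}`. -/
def WbarSet (nX nY : ℕ) : Set (Matrix (Fin (nX+1)) (Fin (nY+1)) ℝ) :=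
  {W | (∀ i j, 0 ≤ W i j) ∧
    (∀ j : Fin nY, ∑ i, W i j.castSucc = 1) ∧
    (∀ i : Fin nX, ∑ j, W i.castSucc j = 1) ∧
    W (Fin.last nX) (Fin.last nY) = 0}

/-- The cost matrix `D_{X,Y}`. -/
noncomputable def Dmat (p c : ℝ) (X Y : Graph 𝕏) :
    Matrix (Fin (X.n+1)) (Fin (Y.n+1)) ℝ :=
  fun i j =>
    if hi : (i : ℕ) < X.n then
      if hj : (j : ℕ) < Y.n then dist (X.nodes ⟨i, hi⟩) (Y.nodes ⟨j, hj⟩) ^ p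
      else c ^ p / 2
    else if (j : ℕ) < Y.n then c ^ p / 2 else 0

/-- The graph GOSPA objective `tr[D_{X,Y}ᵀ W] + (ε^p/2) ‖A_X W' − W' A_Y‖`. -/
noncomputable def obj (p c ε : ℝ) (X Y : Graph 𝕏)
    (W : Matrix (Fin (X.n+1)) (Fin (Y.n+1)) ℝ) : ℝ :=
  Matrix.trace ((Dmat p c X Y)ᵀ * W) +
    ε ^ p / 2 * onorm (X.A * topLeft W - topLeft W * Y.A)

/-- The graph GOSPA distance `d^{(c,ε)}`. -/
noncomputable def gospa (p c ε : ℝ) (X Y : Graph 𝕏) : ℝ :=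
  sInf {v | ∃ W ∈ Wset X.n Y.n, v = obj p c ε X Y W} ^ (1 / p)

/-- The LP relaxation of `d^{(c,ε)}`. -/
noncomputable def gospaLP (p c ε : ℝ) (X Y : Graph 𝕏) : ℝ :=
  sInf {v | ∃ W ∈ WbarSet X.n Y.n, v = obj p c ε X Y W} ^ (1 / p)

def nodeSet (X : Graph 𝕏) : Set 𝕏 := Set.range X.nodes

def edgeSet (X : Graph 𝕏) : Set (Sym2 𝕏) :=
  {e | ∃ i j, X.A i j = 1 ∧ e = s(X.nodes i, X.nodes j)}

def GraphEq (X Y : Graph 𝕏) : Prop :=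
  nodeSet X = nodeSet Y ∧ edgeSet X = edgeSet Y

end GraphGOSPA

open Finset

theorem Option.elim_eq_ite_add_elim {α M : Type*} [AddZeroClass M] (o : Option α) (b : M)
    (F : α → M) : o.elim b F = (if o = none then b else 0) + o.elim 0 F := by
  cases o <;> simp

theorem Option.elim_zero_eq_sum {α M : Type*} [Fintype α] [DecidableEq α] [AddCommMonoid M]
    (o : Option α) (F : α → M) : o.elim 0 F = ∑ a, if a ∈ o then F a else 0 := by
  cases o <;> simp

theorem eq_of_zero_or_one_of_iff {R : Type*} [Zero R] [One R] [NeZero (1 : R)] {a b : R}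
    (ha : a = 0 ∨ a = 1) (hb : b = 0 ∨ b = 1) (h : a = 1 ↔ b = 1) : a = b := by
  rcases ha with rfl | rfl <;> rcases hb with rfl | rfl <;> simp_all

theorem existsUnique_eq_one_of_sum_eq_one {ι : Type*} [Fintype ι] {v : ι → ℝ}
    (h01 : ∀ i, v i = 0 ∨ v i = 1) (hsum : ∑ i, v i = 1) : ∃! i, v i = 1 := by
  classical
  have hv : ∑ i, v i = ∑ i, if v i = 1 then 1 else 0 :=
    sum_congr rfl fun i _ => by rcases h01 i with h | h <;> simp [h]
  have hcard : #{i | v i = 1} = 1 := by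
    exact_mod_cast (sum_boole (fun i => v i = 1) univ).symm.trans (hv.symm.trans hsum)
  obtain ⟨a, ha⟩ := card_eq_one.mp hcard
  refine ⟨a, ?_, fun b hb => ?_⟩
  · simpa using ha.ge (mem_singleton_self a)
  · simpa using ha.le (mem_filter.mpr ⟨mem_univ b, hb⟩)

theorem Lp_add_le_of_nonneg_add {ι : Type*} [Fintype ι] {p : ℝ} (hp : 1 ≤ p) {a b : ι → ℝ}
    (ha : ∀ i, 0 ≤ a i) (hb : ∀ i, 0 ≤ b i) {V W : ℝ} (hV : 0 ≤ V) (hW : 0 ≤ W) :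
    (∑ i, (a i + b i) ^ p + (V + W)) ^ (1 / p) ≤
      (∑ i, a i ^ p + V) ^ (1 / p) + (∑ i, b i ^ p + W) ^ (1 / p) := by
  have hp0 : p ≠ 0 := by positivity
  -- `V` and `W` enter as the `p`-th powers of one extra coordinate
  let a' : Option ι → ℝ := fun o => o.elim (V ^ p⁻¹) a
  let b' : Option ι → ℝ := fun o => o.elim (W ^ p⁻¹) b
  have ha' : ∀ o, 0 ≤ a' o := fun o => by cases o <;> simp [a', ha, Real.rpow_nonneg hV]
  have hb' : ∀ o, 0 ≤ b' o := fun o => by cases o <;> simp [b', hb, Real.rpow_nonneg hW]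
  have hsum : ∑ i, (a i + b i) ^ p + (V + W) ≤ ∑ o, (a' o + b' o) ^ p := by
    rw [Fintype.sum_option, add_comm _ (V + W)]
    refine add_le_add ?_ le_rfl
    have := Real.add_rpow_le_rpow_add (Real.rpow_nonneg hV p⁻¹) (Real.rpow_nonneg hW p⁻¹) hp
    rwa [Real.rpow_inv_rpow hV hp0, Real.rpow_inv_rpow hW hp0] at this
  have hsum_a : ∑ o, a' o ^ p = ∑ i, a i ^ p + V := by
    simp [a', Fintype.sum_option, Real.rpow_inv_rpow hV hp0, add_comm]
  have hsum_b : ∑ o, b' o ^ p = ∑ i, b i ^ p + W := by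
    simp [b', Fintype.sum_option, Real.rpow_inv_rpow hW hp0, add_comm]
  calc (∑ i, (a i + b i) ^ p + (V + W)) ^ (1 / p)
      ≤ (∑ o, (a' o + b' o) ^ p) ^ (1 / p) := by
        refine Real.rpow_le_rpow ?_ hsum (by positivity)
        exact add_nonneg (sum_nonneg fun i _ => Real.rpow_nonneg (add_nonneg (ha i) (hb i)) p)
          (add_nonneg hV hW)
    _ ≤ (∑ o, a' o ^ p) ^ (1 / p) + (∑ o, b' o ^ p) ^ (1 / p) :=
        Real.Lp_add_le_of_nonneg univ hp (fun o _ => ha' o) (fun o _ => hb' o)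
    _ = _ := by rw [hsum_a, hsum_b]

theorem finSuccEquivLast_eq_some_iff {n : ℕ} {x : Fin (n + 1)} {j : Fin n} :
    finSuccEquivLast x = some j ↔ x = j.castSucc := by
  rw [← Equiv.eq_symm_apply, finSuccEquivLast_symm_some]

theorem finSuccEquivLast_eq_none_iff {n : ℕ} {x : Fin (n + 1)} :
    finSuccEquivLast x = none ↔ x = Fin.last n := by
  rw [← Equiv.eq_symm_apply, finSuccEquivLast_symm_none]

theorem Matrix.trace_transpose_mul_eq_sum {m n R : Type*} [Fintype m] [Fintype n]
    [AddCommMonoid R] [Mul R] (A B : Matrix m n R) :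
    Matrix.trace (Aᵀ * B) = ∑ i, ∑ j, A i j * B i j := by
  simp only [Matrix.trace, Matrix.diag_apply, Matrix.mul_apply, Matrix.transpose_apply]
  exact sum_comm

theorem ciInf_eq_zero_iff_of_finite {ι : Type*} [Nonempty ι] [Finite ι] {f : ι → ℝ}
    (hf : ∀ i, 0 ≤ f i) : ⨅ i, f i = 0 ↔ ∃ i, f i = 0 := by
  obtain ⟨i₀, hi₀⟩ := exists_eq_ciInf_of_finite (f := f)
  refine ⟨fun h => ⟨i₀, hi₀.trans h⟩, fun ⟨i, hi⟩ => le_antisymm ?_ (le_ciInf hf)⟩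
  exact (ciInf_le (Finite.bddBelow_range f) i).trans hi.le

namespace PEquiv

variable {α β M : Type*} [AddCommMonoid M]

instance [Finite α] [Finite β] : Finite (α ≃. β) :=
  Finite.of_injective _ DFunLike.coe_injective

theorem exists_equiv_of_forall_isSome {f : α ≃. β} (hf : ∀ a, (f a).isSome)
    (hf' : ∀ b, (f.symm b).isSome) : ∃ σ : α ≃ β, f = σ.toPEquiv := by
  have hfa : ∀ a, f a = some ((f a).get (hf a)) := fun a => (Option.some_get _).symm
  have hfb : ∀ b, f.symm b = some ((f.symm b).get (hf' b)) := fun b => (Option.some_get _).symm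
  refine ⟨⟨fun a => (f a).get (hf a), fun b => (f.symm b).get (hf' b), fun a => ?_, fun b => ?_⟩,
    ext fun a => by rw [Equiv.toPEquiv_apply]; exact hfa a⟩
  · exact Option.some_injective _ (by rw [← hfb, f.eq_some_iff, ← hfa])
  · exact Option.some_injective _ (by rw [← hfa, ← f.eq_some_iff, ← hfb])

@[simp] theorem trans_apply {γ : Type*} (f : α ≃. β) (g : β ≃. γ) (a : α) :
    f.trans g a = (f a).bind g :=
  rfl

variable [Fintype α] [Fintype β]

theorem sum_elim_symm (f : α ≃. β) (G : α → β → M) :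
    ∑ a, (f a).elim 0 (G a) = ∑ b, (f.symm b).elim 0 fun a => G a b := by
  classical
  simp only [Option.elim_zero_eq_sum, f.mem_iff_mem]
  exact sum_comm

theorem sum_eq_sum_ite_add_sum_symm (f : α ≃. β) (F : α → M) :
    ∑ a, F a = ∑ a, (if f a = none then F a else 0) + ∑ b, (f.symm b).elim 0 F := by
  rw [← f.sum_elim_symm fun a _ => F a, ← sum_add_distrib]
  exact sum_congr rfl fun a _ => by cases f a <;> simp

end PEquiv

namespace GraphGOSPA

section Onorm

variable {m n k : ℕ}

theorem onorm_nonneg (M : Matrix (Fin m) (Fin n) ℝ) : 0 ≤ onorm M :=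
  sum_nonneg fun _ _ => sum_nonneg fun _ _ => abs_nonneg _

theorem onorm_eq_zero_iff {M : Matrix (Fin m) (Fin n) ℝ} : onorm M = 0 ↔ M = 0 := by
  simp [onorm, sum_eq_zero_iff_of_nonneg, abs_nonneg, sum_nonneg, ← Matrix.ext_iff]

theorem onorm_neg (M : Matrix (Fin m) (Fin n) ℝ) : onorm (-M) = onorm M := by
  simp [onorm]

theorem onorm_transpose (M : Matrix (Fin m) (Fin n) ℝ) : onorm Mᵀ = onorm M :=
  sum_comm

theorem onorm_add_le (M N : Matrix (Fin m) (Fin n) ℝ) : onorm (M + N) ≤ onorm M + onorm N := by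
  simp only [onorm, ← sum_add_distrib]
  exact sum_le_sum fun i _ => sum_le_sum fun j _ => abs_add_le _ _

theorem onorm_mul_toMatrix_le (M : Matrix (Fin m) (Fin n) ℝ) (g : Fin n ≃. Fin k) :
    onorm (M * (g.toMatrix : Matrix (Fin n) (Fin k) ℝ)) ≤ onorm M := by
  refine sum_le_sum fun i _ => ?_
  have hentry : ∀ j, |(M * (g.toMatrix : Matrix (Fin n) (Fin k) ℝ)) i j| =
      (g.symm j).elim 0 fun l => |M i l| := fun j => by
    rw [PEquiv.mul_toMatrix_apply]; cases g.symm j <;> simp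
  simp only [hentry, g.symm.sum_elim_symm fun j l => |M i l|, PEquiv.symm_symm]
  exact sum_le_sum fun l _ => by cases g l <;> simp

theorem onorm_toMatrix_mul_le (h : Fin m ≃. Fin n) (M : Matrix (Fin n) (Fin k) ℝ) :
    onorm ((h.toMatrix : Matrix (Fin m) (Fin n) ℝ) * M) ≤ onorm M := by
  rw [← onorm_transpose, Matrix.transpose_mul, ← PEquiv.toMatrix_symm, ← onorm_transpose M]
  exact onorm_mul_toMatrix_le _ _

end Onorm

section Assignment

variable {m n : ℕ}

/-- The last row and column stand for the dummy node that absorbs the unassigned nodes. -/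
def toAssignment (f : Fin m ≃. Fin n) : Matrix (Fin (m + 1)) (Fin (n + 1)) ℝ :=
  Fin.lastCases (Fin.lastCases 0 fun j => if f.symm j = none then 1 else 0)
    (fun i => Fin.lastCases (if f i = none then 1 else 0) (f.toMatrix i))

variable (f : Fin m ≃. Fin n) (i : Fin m) (j : Fin n)

@[simp] theorem toAssignment_castSucc_castSucc :
    toAssignment f i.castSucc j.castSucc = f.toMatrix i j := by
  simp [toAssignment]

@[simp] theorem toAssignment_castSucc_last :
    toAssignment f i.castSucc (Fin.last n) = if f i = none then 1 else 0 := by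
  simp [toAssignment]

@[simp] theorem toAssignment_last_castSucc :
    toAssignment f (Fin.last m) j.castSucc = if f.symm j = none then 1 else 0 := by
  simp [toAssignment]

@[simp] theorem toAssignment_last_last : toAssignment f (Fin.last m) (Fin.last n) = 0 := by
  simp [toAssignment]

theorem topLeft_toAssignment : topLeft (toAssignment f) = f.toMatrix := by
  ext i j
  simp [topLeft]

theorem toAssignment_mem_Wset : toAssignment f ∈ Wset m n := by
  refine ⟨fun i j => ?_, fun j => ?_, fun i => ?_, toAssignment_last_last f⟩
  · induction i using Fin.lastCases <;> induction j using Fin.lastCases <;>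
      simp [PEquiv.toMatrix_apply] <;> tauto
  · simp only [Fin.sum_univ_castSucc, toAssignment_castSucc_castSucc,
      toAssignment_last_castSucc, PEquiv.toMatrix_apply, ← f.mem_iff_mem]
    cases f.symm j <;> simp
  · simp only [Fin.sum_univ_castSucc, toAssignment_castSucc_castSucc,
      toAssignment_castSucc_last, PEquiv.toMatrix_apply]
    cases f i <;> simp

end Assignment

theorem exists_toAssignment_eq {m n : ℕ} {W : Matrix (Fin (m + 1)) (Fin (n + 1)) ℝ}
    (hW : W ∈ Wset m n) : ∃ f, toAssignment f = W := by
  obtain ⟨h01, hcol, hrow, hcorner⟩ := hW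
  choose r hr hr_unique using fun i : Fin m =>
    existsUnique_eq_one_of_sum_eq_one (fun j => h01 i.castSucc j) (hrow i)
  choose s hs hs_unique using fun j : Fin n =>
    existsUnique_eq_one_of_sum_eq_one (fun i => h01 i j.castSucc) (hcol j)
  have hr' : ∀ i x, r i = x ↔ W i.castSucc x = 1 := fun i x =>
    ⟨fun h => h ▸ hr i, fun h => (hr_unique i x h).symm⟩
  have hs' : ∀ j x, s j = x ↔ W x j.castSucc = 1 := fun j x =>
    ⟨fun h => h ▸ hs j, fun h => (hs_unique j x h).symm⟩
  let f : Fin m ≃. Fin n :=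
    { toFun := fun i => finSuccEquivLast (r i)
      invFun := fun j => finSuccEquivLast (s j)
      inv := fun i j => by simp only [finSuccEquivLast_eq_some_iff, hr', hs'] }
  have hf : ∀ i, f i = finSuccEquivLast (r i) := fun _ => rfl
  have hf' : ∀ j, f.symm j = finSuccEquivLast (s j) := fun _ => rfl
  refine ⟨f, Matrix.ext fun i j => ?_⟩
  refine eq_of_zero_or_one_of_iff ((toAssignment_mem_Wset f).1 i j) (h01 i j) ?_
  induction i using Fin.lastCases <;> induction j using Fin.lastCases
  · simp [hcorner]
  · simp [hf', finSuccEquivLast_eq_none_iff, hs']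
  · simp [hf, finSuccEquivLast_eq_none_iff, hr']
  · simp [hf, PEquiv.toMatrix_apply, finSuccEquivLast_eq_some_iff, hr']

variable {𝕏 : Type*} [MetricSpace 𝕏]

section Cost

variable (p κ η : ℝ) (X Y Z : Graph 𝕏)

noncomputable def nodeCost (f : Fin X.n ≃. Fin Y.n) : ℝ :=
  ∑ i, (f i).elim κ (fun j => dist (X.nodes i) (Y.nodes j) ^ p) +
    ∑ j, if f.symm j = none then κ else 0

def mismatch (f : Fin X.n ≃. Fin Y.n) : Matrix (Fin X.n) (Fin Y.n) ℝ :=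
  X.A * (f.toMatrix : Matrix (Fin X.n) (Fin Y.n) ℝ) -
    (f.toMatrix : Matrix (Fin X.n) (Fin Y.n) ℝ) * Y.A

noncomputable def cost (f : Fin X.n ≃. Fin Y.n) : ℝ :=
  nodeCost p κ X Y f + η * onorm (mismatch X Y f)

def IsIso (σ : Fin X.n ≃ Fin Y.n) : Prop :=
  (∀ i, X.nodes i = Y.nodes (σ i)) ∧ ∀ i k, X.A i k = Y.A (σ i) (σ k)

variable {p κ η X Y Z}

theorem obj_toAssignment (c ε : ℝ) (f : Fin X.n ≃. Fin Y.n) :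
    obj p c ε X Y (toAssignment f) = cost p (c ^ p / 2) (ε ^ p / 2) X Y f := by
  have hrow : ∀ i, ∑ j, Dmat p c X Y i.castSucc j * toAssignment f i.castSucc j =
      (f i).elim (c ^ p / 2) (fun j => dist (X.nodes i) (Y.nodes j) ^ p) := fun i => by
    simp only [Fin.sum_univ_castSucc, toAssignment_castSucc_castSucc,
      toAssignment_castSucc_last, PEquiv.toMatrix_apply]
    cases f i <;> simp [Dmat]
  have hlast : ∑ j, Dmat p c X Y (Fin.last X.n) j * toAssignment f (Fin.last X.n) j =
      ∑ j, if f.symm j = none then c ^ p / 2 else 0 := by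
    simp [Fin.sum_univ_castSucc, Dmat]
  rw [obj, topLeft_toAssignment, Matrix.trace_transpose_mul_eq_sum, Fin.sum_univ_castSucc]
  simp only [hrow, hlast]
  rfl

theorem gospa_eq_ciInf_cost (c ε : ℝ) :
    gospa p c ε X Y = (⨅ f, cost p (c ^ p / 2) (ε ^ p / 2) X Y f) ^ (1 / p) := by
  refine congrArg (· ^ (1 / p)) (congrArg sInf (Set.ext fun v => ?_))
  constructor
  · rintro ⟨W, hW, rfl⟩
    obtain ⟨f, rfl⟩ := exists_toAssignment_eq hW
    exact ⟨f, (obj_toAssignment c ε f).symm⟩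
  · rintro ⟨f, rfl⟩
    exact ⟨_, toAssignment_mem_Wset f, (obj_toAssignment c ε f).symm⟩

theorem nodeCost_nonneg (hκ : 0 ≤ κ) (f : Fin X.n ≃. Fin Y.n) : 0 ≤ nodeCost p κ X Y f := by
  refine add_nonneg (sum_nonneg fun i _ => ?_) (sum_nonneg fun j _ => by split_ifs <;> simp [hκ])
  cases f i <;> simp [hκ, Real.rpow_nonneg dist_nonneg]

theorem cost_nonneg (hκ : 0 ≤ κ) (hη : 0 ≤ η) (f : Fin X.n ≃. Fin Y.n) :
    0 ≤ cost p κ η X Y f :=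
  add_nonneg (nodeCost_nonneg hκ f) (mul_nonneg hη (onorm_nonneg _))

theorem nodeCost_symm (f : Fin X.n ≃. Fin Y.n) : nodeCost p κ Y X f.symm = nodeCost p κ X Y f := by
  simp only [nodeCost, PEquiv.symm_symm, Option.elim_eq_ite_add_elim _ κ, sum_add_distrib]
  rw [f.symm.sum_elim_symm]
  simp only [PEquiv.symm_symm, dist_comm (Y.nodes _)]
  ac_rfl

theorem mismatch_symm (f : Fin X.n ≃. Fin Y.n) : mismatch Y X f.symm = -(mismatch X Y f)ᵀ := by
  simp only [mismatch, PEquiv.toMatrix_symm, Matrix.transpose_sub, Matrix.transpose_mul,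
    X.A_symm.eq, Y.A_symm.eq, neg_sub]

theorem cost_symm (f : Fin X.n ≃. Fin Y.n) : cost p κ η Y X f.symm = cost p κ η X Y f := by
  rw [cost, cost, nodeCost_symm, mismatch_symm, onorm_neg, onorm_transpose]

theorem mismatch_trans (h : Fin X.n ≃. Fin Z.n) (g : Fin Z.n ≃. Fin Y.n) :
    mismatch X Y (h.trans g) = mismatch X Z h * (g.toMatrix : Matrix (Fin Z.n) (Fin Y.n) ℝ) +
      (h.toMatrix : Matrix (Fin X.n) (Fin Z.n) ℝ) * mismatch Z Y g := by
  simp only [mismatch, PEquiv.toMatrix_trans, Matrix.mul_sub, Matrix.sub_mul, Matrix.mul_assoc]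
  abel

theorem onorm_mismatch_trans_le (h : Fin X.n ≃. Fin Z.n) (g : Fin Z.n ≃. Fin Y.n) :
    onorm (mismatch X Y (h.trans g)) ≤ onorm (mismatch X Z h) + onorm (mismatch Z Y g) := by
  rw [mismatch_trans]
  exact (onorm_add_le _ _).trans
    (add_le_add (onorm_mul_toMatrix_le _ _) (onorm_toMatrix_mul_le _ _))

theorem nodeCost_eq_sum_rpow (hp : p ≠ 0) (hκ : 0 ≤ κ) (f : Fin X.n ≃. Fin Y.n) :
    nodeCost p κ X Y f = ∑ i, (f i).elim (κ ^ p⁻¹) (fun j => dist (X.nodes i) (Y.nodes j)) ^ p +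
      ∑ j, if f.symm j = none then κ else 0 := by
  refine congrArg (· + _) (sum_congr rfl fun i _ => ?_)
  cases f i <;> simp [Real.rpow_inv_rpow hκ hp]

/-- The node `k` of `Z` pays for its partners in `X` and in `Y`, which stay unassigned under
`h.trans g` when `k` has no partner on the other side. -/
theorem nodeCost_trans_summand_le (hp : 1 ≤ p) (hκ : 0 ≤ κ) (h : Fin X.n ≃. Fin Z.n)
    (g : Fin Z.n ≃. Fin Y.n) (k : Fin Z.n) :
    (h.symm k).elim 0 (fun i => (h.trans g i).elim κ fun j => dist (X.nodes i) (Y.nodes j) ^ p) +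
        (g k).elim 0 (fun j => if (h.trans g).symm j = none then κ else 0) ≤
      ((h.symm k).elim (κ ^ p⁻¹) (fun i => dist (Z.nodes k) (X.nodes i)) +
        (g k).elim (κ ^ p⁻¹) (fun j => dist (Z.nodes k) (Y.nodes j))) ^ p := by
  have hp0 : 0 ≤ p := by linarith
  have hγ : ∀ t, 0 ≤ t → κ ≤ (κ ^ p⁻¹ + t) ^ p := fun t ht => by
    conv_lhs => rw [← Real.rpow_inv_rpow hκ (by positivity : p ≠ 0)]
    exact Real.rpow_le_rpow (by positivity) (le_add_of_nonneg_right ht) hp0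
  cases hk : h.symm k with
  | none =>
    cases hg : g k with
    | none => simp only [Option.elim_none, add_zero]; positivity
    | some j =>
      have : (h.trans g).symm j = none := by
        simp [PEquiv.symm_trans_rev, g.eq_some_iff.mpr hg, hk]
      simpa [this] using hγ _ dist_nonneg
  | some i =>
    have hi : h i = some k := h.eq_some_iff.mp hk
    cases hg : g k with
    | none =>
      have : h.trans g i = none := by simp [hi, hg]
      simp only [this, Option.elim_some, Option.elim_none, add_zero]
      rw [add_comm]
      exact hγ _ dist_nonneg
    | some j =>
      have : h.trans g i = some j := by simp [hi, hg]
      have : (h.trans g).symm j = some i := (PEquiv.eq_some_iff _).mpr this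
      simp only [*, Option.elim_some, reduceCtorEq, if_false, add_zero]
      refine Real.rpow_le_rpow dist_nonneg ?_ hp0
      exact (dist_triangle _ (Z.nodes k) _).trans_eq (by rw [dist_comm])

theorem nodeCost_trans_le (hp : 1 ≤ p) (hκ : 0 ≤ κ) (h : Fin X.n ≃. Fin Z.n)
    (g : Fin Z.n ≃. Fin Y.n) :
    nodeCost p κ X Y (h.trans g) ≤
      ∑ k, ((h.symm k).elim (κ ^ p⁻¹) (fun i => dist (Z.nodes k) (X.nodes i)) +
        (g k).elim (κ ^ p⁻¹) (fun j => dist (Z.nodes k) (Y.nodes j))) ^ p +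
      ((∑ i, if h i = none then κ else 0) + ∑ j, if g.symm j = none then κ else 0) := by
  have hX : ∀ i, (if h i = none then (h.trans g i).elim κ fun j =>
      dist (X.nodes i) (Y.nodes j) ^ p else 0) = if h i = none then κ else 0 := fun i => by
    split_ifs with hi <;> simp [hi]
  have hY : ∀ j, (if g.symm j = none then (if (h.trans g).symm j = none then κ else 0) else 0) =
      if g.symm j = none then κ else 0 := fun j => by
    split_ifs with hj <;> simp_all [PEquiv.symm_trans_rev]
  rw [nodeCost, h.sum_eq_sum_ite_add_sum_symm, g.symm.sum_eq_sum_ite_add_sum_symm]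
  simp only [hX, hY, PEquiv.symm_symm]
  have hsummands := sum_le_sum fun k (_ : k ∈ univ) => nodeCost_trans_summand_le hp hκ h g k
  rw [sum_add_distrib] at hsummands
  linarith

theorem cost_trans_rpow_le (hp : 1 ≤ p) (hκ : 0 ≤ κ) (hη : 0 ≤ η) (h : Fin X.n ≃. Fin Z.n)
    (g : Fin Z.n ≃. Fin Y.n) :
    cost p κ η X Y (h.trans g) ^ (1 / p) ≤
      cost p κ η X Z h ^ (1 / p) + cost p κ η Z Y g ^ (1 / p) := by
  have hp0 : p ≠ 0 := by positivity
  set a := fun k => (h.symm k).elim (κ ^ p⁻¹) (fun i => dist (Z.nodes k) (X.nodes i))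
  set b := fun k => (g k).elim (κ ^ p⁻¹) (fun j => dist (Z.nodes k) (Y.nodes j))
  set V := (∑ i, if h i = none then κ else 0) + η * onorm (mismatch X Z h)
  set W := (∑ j, if g.symm j = none then κ else 0) + η * onorm (mismatch Z Y g)
  have ha : ∀ k, 0 ≤ a k := fun k => by
    dsimp only [a]; cases h.symm k <;> simp [Real.rpow_nonneg hκ]
  have hb : ∀ k, 0 ≤ b k := fun k => by
    dsimp only [b]; cases g k <;> simp [Real.rpow_nonneg hκ]
  have hV : 0 ≤ V := add_nonneg (sum_nonneg fun i _ => by split_ifs <;> simp [hκ])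
    (mul_nonneg hη (onorm_nonneg _))
  have hW : 0 ≤ W := add_nonneg (sum_nonneg fun j _ => by split_ifs <;> simp [hκ])
    (mul_nonneg hη (onorm_nonneg _))
  have hcost_h : cost p κ η X Z h = ∑ k, a k ^ p + V := by
    rw [cost, ← nodeCost_symm, nodeCost_eq_sum_rpow hp0 hκ, PEquiv.symm_symm, add_assoc]
  have hcost_g : cost p κ η Z Y g = ∑ k, b k ^ p + W := by
    rw [cost, nodeCost_eq_sum_rpow hp0 hκ, add_assoc]
  have hcost : cost p κ η X Y (h.trans g) ≤ ∑ k, (a k + b k) ^ p + (V + W) := by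
    have hedge := mul_le_mul_of_nonneg_left (onorm_mismatch_trans_le h g) hη
    have hnode := nodeCost_trans_le hp hκ h g
    rw [cost]
    linarith
  calc cost p κ η X Y (h.trans g) ^ (1 / p)
      ≤ (∑ k, (a k + b k) ^ p + (V + W)) ^ (1 / p) :=
        Real.rpow_le_rpow (cost_nonneg hκ hη _) hcost (by positivity)
    _ ≤ (∑ k, a k ^ p + V) ^ (1 / p) + (∑ k, b k ^ p + W) ^ (1 / p) :=
        Lp_add_le_of_nonneg_add hp ha hb hV hW
    _ = _ := by rw [hcost_h, hcost_g]

theorem nodeCost_eq_zero_iff (hp : p ≠ 0) (hκ : 0 < κ) (f : Fin X.n ≃. Fin Y.n) :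
    nodeCost p κ X Y f = 0 ↔
      ∃ σ : Fin X.n ≃ Fin Y.n, f = σ.toPEquiv ∧ ∀ i, X.nodes i = Y.nodes (σ i) := by
  have hX : ∀ i, 0 ≤ (f i).elim κ fun j => dist (X.nodes i) (Y.nodes j) ^ p := fun i => by
    cases f i <;> simp [hκ.le, Real.rpow_nonneg dist_nonneg]
  have hY : ∀ j, 0 ≤ if f.symm j = none then κ else 0 := fun j => by split_ifs <;> simp [hκ.le]
  constructor
  · intro h0
    rw [nodeCost, add_eq_zero_iff_of_nonneg (sum_nonneg fun i _ => hX i)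
      (sum_nonneg fun j _ => hY j), sum_eq_zero_iff_of_nonneg (fun i _ => hX i),
      sum_eq_zero_iff_of_nonneg (fun j _ => hY j)] at h0
    have hdom : ∀ i, ∃ j, f i = some j ∧ X.nodes i = Y.nodes j := fun i => by
      have := h0.1 i (mem_univ i)
      cases hfi : f i <;> simp_all [hκ.ne', Real.rpow_eq_zero dist_nonneg hp]
    have hran : ∀ j, (f.symm j).isSome := fun j => by
      have := h0.2 j (mem_univ j)
      cases hfj : f.symm j <;> simp_all [hκ.ne']
    obtain ⟨σ, rfl⟩ := PEquiv.exists_equiv_of_forall_isSome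
      (fun i => by obtain ⟨j, hj, -⟩ := hdom i; simp [hj]) hran
    refine ⟨σ, rfl, fun i => ?_⟩
    obtain ⟨j, hj, hx⟩ := hdom i
    rw [hx, Option.some_injective _ ((Equiv.toPEquiv_apply σ i).symm.trans hj)]
  · rintro ⟨σ, rfl, hσ⟩
    simp [nodeCost, hσ, Real.zero_rpow hp, ← Equiv.toPEquiv_symm]

theorem mismatch_toPEquiv_eq_zero_iff (σ : Fin X.n ≃ Fin Y.n) :
    mismatch X Y σ.toPEquiv = 0 ↔ ∀ i k, X.A i k = Y.A (σ i) (σ k) := by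
  rw [mismatch, sub_eq_zero, PEquiv.toMatrix_toPEquiv_mul, PEquiv.mul_toMatrix_toPEquiv,
    ← Matrix.ext_iff]
  refine forall_congr' fun i => ?_
  rw [← σ.forall_congr_right]
  simp

theorem cost_eq_zero_iff (hp : p ≠ 0) (hκ : 0 < κ) (hη : 0 < η) (f : Fin X.n ≃. Fin Y.n) :
    cost p κ η X Y f = 0 ↔ ∃ σ, f = σ.toPEquiv ∧ IsIso X Y σ := by
  rw [cost, add_eq_zero_iff_of_nonneg (nodeCost_nonneg hκ.le f)
      (mul_nonneg hη.le (onorm_nonneg _)), mul_eq_zero, or_iff_right hη.ne', onorm_eq_zero_iff,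
    nodeCost_eq_zero_iff hp hκ]
  constructor
  · rintro ⟨⟨σ, rfl, hnodes⟩, hA⟩
    exact ⟨σ, rfl, hnodes, (mismatch_toPEquiv_eq_zero_iff σ).mp hA⟩
  · rintro ⟨σ, rfl, hnodes, hA⟩
    exact ⟨⟨σ, rfl, hnodes⟩, (mismatch_toPEquiv_eq_zero_iff σ).mpr hA⟩

theorem mem_edgeSet_iff (i k : Fin X.n) : s(X.nodes i, X.nodes k) ∈ edgeSet X ↔ X.A i k = 1 := by
  refine ⟨?_, fun h => ⟨i, k, h, rfl⟩⟩
  rintro ⟨a, b, hab, he⟩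
  rcases Sym2.eq_iff.mp he with ⟨hi, hk⟩ | ⟨hi, hk⟩
  · rwa [X.nodes_inj hi, X.nodes_inj hk]
  · rwa [X.nodes_inj hi, X.nodes_inj hk, X.A_symm.apply]

theorem graphEq_iff_exists_isIso : GraphEq X Y ↔ ∃ σ, IsIso X Y σ := by
  constructor
  · rintro ⟨hnodes, hedges⟩
    let σ : Fin X.n ≃ Fin Y.n := (Equiv.ofInjective _ X.nodes_inj).trans
      ((Equiv.setCongr hnodes).trans (Equiv.ofInjective _ Y.nodes_inj).symm)
    have hσ : ∀ i, X.nodes i = Y.nodes (σ i) := fun i =>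
      (Equiv.apply_ofInjective_symm Y.nodes_inj
        ⟨X.nodes i, (hnodes ▸ ⟨i, rfl⟩ : X.nodes i ∈ nodeSet Y)⟩).symm
    refine ⟨σ, hσ, fun i k => eq_of_zero_or_one_of_iff (X.A_01 i k) (Y.A_01 _ _) ?_⟩
    rw [← mem_edgeSet_iff, ← mem_edgeSet_iff, hedges, hσ, hσ]
  · rintro ⟨σ, hnodes, hA⟩
    refine ⟨by rw [nodeSet, nodeSet, funext hnodes, ← EquivLike.range_comp _ σ]; rfl,
      Set.ext fun e => ⟨?_, ?_⟩⟩
    · rintro ⟨i, k, h, rfl⟩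
      exact ⟨σ i, σ k, hA i k ▸ h, by rw [hnodes, hnodes]⟩
    · rintro ⟨j, l, h, rfl⟩
      exact ⟨σ.symm j, σ.symm l, by simpa [hA] using h, by simp [hnodes]⟩

end Cost

theorem gospa_comm (p c ε : ℝ) (X Y : Graph 𝕏) : gospa p c ε X Y = gospa p c ε Y X := by
  rw [gospa_eq_ciInf_cost, gospa_eq_ciInf_cost,
    ← PEquiv.symm_bijective.surjective.iInf_comp (cost p _ _ Y X)]
  simp only [cost_symm]

theorem gospa_triangle {p c ε : ℝ} (hp : 1 ≤ p) (hc : 0 ≤ c) (hε : 0 ≤ ε) (X Y Z : Graph 𝕏) :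
    gospa p c ε X Y ≤ gospa p c ε X Z + gospa p c ε Z Y := by
  have hκ : 0 ≤ c ^ p / 2 := by positivity
  have hη : 0 ≤ ε ^ p / 2 := by positivity
  obtain ⟨h, hh⟩ := exists_eq_ciInf_of_finite (f := cost p (c ^ p / 2) (ε ^ p / 2) X Z)
  obtain ⟨g, hg⟩ := exists_eq_ciInf_of_finite (f := cost p (c ^ p / 2) (ε ^ p / 2) Z Y)
  rw [gospa_eq_ciInf_cost, gospa_eq_ciInf_cost, gospa_eq_ciInf_cost, ← hh, ← hg]
  refine le_trans ?_ (cost_trans_rpow_le hp hκ hη h g)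
  exact Real.rpow_le_rpow (le_ciInf (cost_nonneg hκ hη)) (ciInf_le (Finite.bddBelow_range _) _)
    (by positivity)

theorem gospa_eq_zero_iff {p c ε : ℝ} (hp : 0 < p) (hc : 0 < c) (hε : 0 < ε)
    (X Y : Graph 𝕏) : gospa p c ε X Y = 0 ↔ GraphEq X Y := by
  have hκ : 0 < c ^ p / 2 := by positivity
  have hη : 0 < ε ^ p / 2 := by positivity
  rw [gospa_eq_ciInf_cost, Real.rpow_eq_zero (le_ciInf (cost_nonneg hκ.le hη.le)) (by positivity),
    ciInf_eq_zero_iff_of_finite (cost_nonneg hκ.le hη.le), graphEq_iff_exists_isIso]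
  simp only [cost_eq_zero_iff hp.ne' hκ hη]
  exact ⟨fun ⟨_, σ, _, hσ⟩ => ⟨σ, hσ⟩, fun ⟨σ, hσ⟩ => ⟨_, σ, rfl, hσ⟩⟩

/-- For `1 ≤ p < ∞`, `c > 0`, `ε > 0` and base metric `d`, the graph
GOSPA distance `d^{(c,ε)}`, defined by minimizing over the binary assignment matrices
`𝒲_{X,Y}`, is a metric on the space of undirected unweighted graphs with node
attributes: identity, symmetry and the triangle inequality hold. -/
theorem graph_gospa_is_metric (p c ε : ℝ) (hp : 1 ≤ p) (hc : 0 < c) (hε : 0 < ε) :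
    (∀ X Y : Graph 𝕏, gospa p c ε X Y = 0 ↔ GraphEq X Y) ∧
    (∀ X Y : Graph 𝕏, gospa p c ε X Y = gospa p c ε Y X) ∧
    (∀ X Y Z : Graph 𝕏,
      gospa p c ε X Y ≤ gospa p c ε X Z + gospa p c ε Z Y) :=
  ⟨gospa_eq_zero_iff (by positivity) hc hε, gospa_comm p c ε,
    fun X Y Z => gospa_triangle hp hc.le hε.le X Y Z⟩

end GraphGOSPA
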